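/- Let $A\in\mathbb{R}$, $p>0$, $u$ with $|u|<p$, $g\in\mathbb{R}$, $R = \sqrt{(g\cosh A)^2 + p^2 - u^2}$ and $D = g\cosh A + R$. Then the supremum over $v\in\mathbb{R}$ of $F(v) = g v - (p-u)\frac{e^{A}}{4\cosh A}(e^{2v}-1) - (p+u)\frac{e^{-A}}{4\cosh A}(e^{-2v}-1)$ equals $\frac{g}{2}\Bigl(\log\frac{D}{p-u} - A\Bigr) + \frac{p}{2} - \frac{u}{2}\tanh A - \frac{R}{2\cosh A}$. -/

import Mathlib

/-!
With `a = (p - u) e^A / (4 cosh A)` and `b = (p + u) e^{-A} / (4 cosh A)`, the function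
`F v = g v - a (e^{2v} - 1) - b (e^{-2v} - 1)` is concave, so by the tangent-line bound
`e^x ≥ 1 + x` its supremum is attained at the critical point `v*`, where
`2a e^{2v*} - 2b e^{-2v*} = g`. This quadratic equation in `e^{2v*}` has
the positive root `e^{2v*} = D / ((p - u) e^A)`; evaluating `F` there gives the formula, using
`D (R - g cosh A) = p² - u²`.
-/

open Real

theorem mul_sub_exp_two_mul_le (a b g v w : ℝ) (ha : 0 ≤ a) (hb : 0 ≤ b)
    (hcrit : 2 * a * exp (2 * w) - 2 * b * exp (-(2 * w)) = g) :
    g * v - a * (exp (2 * v) - 1) - b * (exp (-(2 * v)) - 1) ≤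
      g * w - a * (exp (2 * w) - 1) - b * (exp (-(2 * w)) - 1) := by
  have hpos : a * exp (2 * w) * (1 + 2 * (v - w)) ≤ a * exp (2 * v) := by
    rw [show 2 * v = 2 * w + 2 * (v - w) by ring, exp_add, mul_assoc]
    gcongr
    linarith [add_one_le_exp (2 * (v - w))]
  have hneg : b * exp (-(2 * w)) * (1 - 2 * (v - w)) ≤ b * exp (-(2 * v)) := by
    rw [show -(2 * v) = -(2 * w) + -(2 * (v - w)) by ring, exp_add, mul_assoc]
    gcongr
    linarith [add_one_le_exp (-(2 * (v - w)))]
  linear_combination hpos + hneg - (v - w) * hcrit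

theorem ciSup_mul_sub_exp_two_mul (a b g w : ℝ) (ha : 0 ≤ a) (hb : 0 ≤ b)
    (hcrit : 2 * a * exp (2 * w) - 2 * b * exp (-(2 * w)) = g) :
    ⨆ v, g * v - a * (exp (2 * v) - 1) - b * (exp (-(2 * v)) - 1) =
      g * w - a * (exp (2 * w) - 1) - b * (exp (-(2 * w)) - 1) :=
  IsGreatest.csSup_eq ⟨⟨w, rfl⟩, by
    rintro _ ⟨v, rfl⟩
    exact mul_sub_exp_two_mul_le a b g v w ha hb hcrit⟩

theorem add_sqrt_sq_add_pos (x q : ℝ) (hq : 0 < q) : 0 < x + √(x ^ 2 + q) := by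
  have : |x| < √(x ^ 2 + q) := by
    rw [← sqrt_sq_eq_abs]
    exact sqrt_lt_sqrt (sq_nonneg x) (by linarith)
  linarith [neg_abs_le x]

theorem add_sqrt_mul_sqrt_sub (x q : ℝ) (hq : 0 ≤ q) :
    (x + √(x ^ 2 + q)) * (√(x ^ 2 + q) - x) = q := by
  linear_combination sq_sqrt (by positivity : 0 ≤ x ^ 2 + q)

theorem mul_exp_add_mul_exp_neg_div_cosh (A p u : ℝ) :
    (p - u) * (exp A / (4 * cosh A)) + (p + u) * (exp (-A) / (4 * cosh A)) =
      p / 2 - u / 2 * tanh A := by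
  have := (cosh_pos A).ne'
  rw [tanh_eq_sinh_div_cosh]
  field_simp
  rw [cosh_eq, sinh_eq]
  ring

section CriticalPoint

variable {A p u g R D w : ℝ}

theorem mul_exp_div_cosh_mul_exp_critical (hpu : p - u ≠ 0) (hD : D = g * cosh A + R)
    (hw : exp (2 * w) = D / ((p - u) * exp A)) :
    (p - u) * (exp A / (4 * cosh A)) * exp (2 * w) = g / 4 + R / (4 * cosh A) := by
  have := (cosh_pos A).ne'
  rw [hw, hD]
  field_simp

theorem mul_exp_neg_div_cosh_mul_exp_neg_critical (hD0 : D ≠ 0)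
    (hDR : D * (R - g * cosh A) = p ^ 2 - u ^ 2) (hw : exp (2 * w) = D / ((p - u) * exp A)) :
    (p + u) * (exp (-A) / (4 * cosh A)) * exp (-(2 * w)) = R / (4 * cosh A) - g / 4 := by
  have := (cosh_pos A).ne'
  rw [exp_neg A, exp_neg (2 * w), hw]
  field_simp
  linear_combination -hDR

end CriticalPoint

theorem stmt_4_general (A p u g : ℝ) (hu : |u| < p)
    (F : ℝ → ℝ)
    (hF : ∀ v, F v = g * v
      - (p - u) * (Real.exp A / (4 * Real.cosh A)) * (Real.exp (2 * v) - 1)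
      - (p + u) * (Real.exp (-A) / (4 * Real.cosh A)) * (Real.exp (-(2 * v)) - 1))
    (R D : ℝ)
    (hR : R = Real.sqrt ((g * Real.cosh A) ^ 2 + p ^ 2 - u ^ 2))
    (hD : D = g * Real.cosh A + R) :
    (⨆ v : ℝ, F v) =
      g / 2 * (Real.log (D / (p - u)) - A) + p / 2 - u / 2 * Real.tanh A
        - R / (2 * Real.cosh A) := by
  obtain ⟨hu₁, hu₂⟩ := abs_lt.mp hu
  have hpu : 0 < p - u := by linarith
  have hpu' : 0 < p + u := by linarith
  have hq : 0 < p ^ 2 - u ^ 2 := by nlinarith [mul_pos hpu hpu']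
  rw [add_sub_assoc] at hR
  have hDpos : 0 < D := hD ▸ hR ▸ add_sqrt_sq_add_pos _ _ hq
  have hDR : D * (R - g * cosh A) = p ^ 2 - u ^ 2 := hD ▸ hR ▸ add_sqrt_mul_sqrt_sub _ _ hq.le
  have hw : exp (2 * ((log (D / (p - u)) - A) / 2)) = D / ((p - u) * exp A) := by
    rw [mul_div_cancel₀ _ two_ne_zero, exp_sub, exp_log (div_pos hDpos hpu), div_div]
  have h₁ := mul_exp_div_cosh_mul_exp_critical hpu.ne' hD hw
  have h₂ := mul_exp_neg_div_cosh_mul_exp_neg_critical hDpos.ne' hDR hw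
  simp only [hF]
  rw [ciSup_mul_sub_exp_two_mul _ _ _ _ (mul_nonneg hpu.le (by positivity))
    (mul_nonneg hpu'.le (by positivity)) (by linear_combination 2 * h₁ - 2 * h₂)]
  linear_combination -h₁ - h₂ + mul_exp_add_mul_exp_neg_div_cosh A p u

theorem stmt_4 (A p u g : ℝ) (hp : 0 < p) (hu : |u| < p)
    (F : ℝ → ℝ)
    (hF : ∀ v, F v = g * v
      - (p - u) * (Real.exp A / (4 * Real.cosh A)) * (Real.exp (2 * v) - 1)
      - (p + u) * (Real.exp (-A) / (4 * Real.cosh A)) * (Real.exp (-(2 * v)) - 1))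
    (R D : ℝ)
    (hR : R = Real.sqrt ((g * Real.cosh A) ^ 2 + p ^ 2 - u ^ 2))
    (hD : D = g * Real.cosh A + R) :
    (⨆ v : ℝ, F v) =
      g / 2 * (Real.log (D / (p - u)) - A) + p / 2 - u / 2 * Real.tanh A
        - R / (2 * Real.cosh A) :=
  stmt_4_general A p u g hu F hF R D hR hD
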